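/- arXiv:1012.1289 — 4 statements merged into one kernel-verified Lean document; each statement's English description precedes it below -/
import Mathlib

section
/- For every real number λ ≠ 0, the Schrödinger representation π_λ of the Heisenberg group H_m on L²(ℝ^m) is irreducible: every closed linear subspace V ⊆ L²(ℝ^m) with π_λ(g)V ⊆ V for all g ∈ H_m satisfies V = 0 or V = L²(ℝ^m). -/
/-!
Let `0 ≠ f ∈ V` and `g ⊥ V`; by invariance every matrix coefficient `⟪π(0, x, y) f, g⟫` vanishes.
For fixed `y` this coefficient is, up to a unimodular factor, the Fourier transform of the
integrable function `ξ ↦ conj f(ξ + y) · g(ξ)` at `(λ/π) x`, and `x ↦ (λ/π) x` is onto because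
`λ ≠ 0`; by Fourier uniqueness that function vanishes a.e. for every `y`. Integrating
`|f(ξ + y)| |g(ξ)|` over `y` and `ξ` (Tonelli, translation invariance) then gives
`‖f‖₁ ‖g‖₁ = 0` in `[0, ∞]`, so `g = 0`. Hence `Vᗮ = 0`, i.e. `V` is everything.
-/

open MeasureTheory
open scoped RealInnerProductSpace

abbrev Em (m : ℕ) := EuclideanSpace ℝ (Fin m)

/-- The Heisenberg group `H_m` in real coordinates: the element `(it, x+iy)` of
`(Im ℂ) × ℂ^m` is recorded as `(t, x, y) ∈ ℝ × ℝ^m × ℝ^m`. -/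
abbrev HeisR (m : ℕ) := ℝ × Em m × Em m

open FourierTransform
open scoped ENNReal ComplexConjugate ContDiff SchwartzMap InnerProductSpace

section FourierUniqueness

variable {E : Type*} [NormedAddCommGroup E] [InnerProductSpace ℝ E] [FiniteDimensional ℝ E]
  [MeasurableSpace E] [BorelSpace E]

theorem MeasureTheory.Integrable.ae_eq_zero_of_fourier_eq_zero {F : E → ℂ}
    (hF : Integrable F) (h : 𝓕 F = 0) : F =ᵐ[volume] 0 := by
  refine ae_eq_zero_of_integral_contDiff_smul_eq_zero hF.locallyIntegrable fun g hg hgc => ?_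
  let φ : 𝓢(E, ℂ) := (hgc.comp_left (g := Complex.ofRealCLM) rfl).toSchwartzMap
    (Complex.ofRealCLM.contDiff.comp hg)
  let ψ : 𝓢(E, ℂ) := 𝓕⁻ φ
  have hψ : 𝓕 (ψ : E → ℂ) = φ := by
    rw [← SchwartzMap.fourier_coe, FourierTransform.fourier_fourierInv_eq]
  calc ∫ x, g x • F x = ∫ x, F x • 𝓕 (ψ : E → ℂ) x := by
        simp [hψ, φ, Complex.real_smul, mul_comm]
    _ = ∫ ξ, 𝓕 F ξ • ψ ξ := by
        have := VectorFourier.integral_fourierIntegral_smul_eq_flip (L := innerₗ E)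
          Real.continuous_fourierChar continuous_inner hF (ψ.integrable (μ := volume))
        rw [flip_innerₗ] at this
        exact this.symm
    _ = 0 := by simp [h]

end FourierUniqueness

theorem MeasureTheory.ae_eq_zero_or_ae_eq_zero_of_forall_ae_add_mul_eq_zero {G : Type*}
    [MeasurableSpace G] [AddGroup G] [MeasurableAdd₂ G] {μ : Measure G} [SFinite μ]
    [μ.IsAddLeftInvariant]
    {f g : G → ℝ≥0∞} (hf : Measurable f) (hg : Measurable g)
    (h : ∀ y, ∀ᵐ ξ ∂μ, f (ξ + y) * g ξ = 0) : f =ᵐ[μ] 0 ∨ g =ᵐ[μ] 0 := by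
  have hprod : (∫⁻ z, f z ∂μ) * ∫⁻ ξ, g ξ ∂μ = 0 :=
    calc (∫⁻ z, f z ∂μ) * ∫⁻ ξ, g ξ ∂μ = ∫⁻ ξ, ∫⁻ y, f (ξ + y) * g ξ ∂μ ∂μ := by
          rw [← lintegral_const_mul _ hg]
          refine lintegral_congr fun ξ => ?_
          have hfξ : Measurable fun y => f (ξ + y) := hf.comp (measurable_const_add ξ)
          rw [lintegral_mul_const _ hfξ, lintegral_add_left_eq_self f ξ]
      _ = ∫⁻ y, ∫⁻ ξ, f (ξ + y) * g ξ ∂μ ∂μ :=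
          lintegral_lintegral_swap
            ((hf.comp measurable_add).mul (hg.comp measurable_fst)).aemeasurable
      _ = 0 := by simp [lintegral_congr_ae (h _)]
  rcases mul_eq_zero.1 hprod with hf0 | hg0
  · exact .inl ((lintegral_eq_zero_iff hf).1 hf0)
  · exact .inr ((lintegral_eq_zero_iff hg).1 hg0)

theorem MeasureTheory.Lp.integrable_conj_comp_add_mul {G : Type*} [MeasurableSpace G] [AddGroup G]
    [MeasurableAdd G] {μ : Measure G} [μ.IsAddRightInvariant] (f g : Lp ℂ 2 μ) (y : G) :
    Integrable (fun ξ => conj (f (ξ + y)) * g ξ) μ :=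
  ((Lp.memLp f).comp_measurePreserving (measurePreserving_add_right μ y)).star.integrable_mul
    (Lp.memLp g)

def IsSchroedingerRep {m : ℕ} (lam : ℝ)
    (π : HeisR m → (Lp ℂ 2 (volume : Measure (Em m)) ≃ₗᵢ[ℂ] Lp ℂ 2 (volume : Measure (Em m)))) :
    Prop :=
  ∀ (t : ℝ) (x y : Em m) (φ : Lp ℂ 2 (volume : Measure (Em m))),
    ⇑(π (t, x, y) φ) =ᵐ[volume]
      fun ξ : Em m => Complex.exp (Complex.I * (lam * (t + 2 * ⟪x, ξ⟫ + ⟪x, y⟫) : ℝ)) * φ (ξ + y)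

namespace IsSchroedingerRep

variable {m : ℕ} {lam : ℝ}
  {π : HeisR m → (Lp ℂ 2 (volume : Measure (Em m)) ≃ₗᵢ[ℂ] Lp ℂ 2 (volume : Measure (Em m)))}

theorem inner_eq_fourier (hπ : IsSchroedingerRep lam π) (f g : Lp ℂ 2 (volume : Measure (Em m)))
    (x y : Em m) :
    ⟪π (0, x, y) f, g⟫_ℂ = Complex.exp (-(Complex.I * (lam * ⟪x, y⟫ : ℝ))) *
      𝓕 (fun ξ => conj (f (ξ + y)) * g ξ) ((lam / Real.pi) • x) := by
  rw [L2.inner_def, Real.fourier_eq, ← integral_const_mul]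
  refine integral_congr_ae ?_
  filter_upwards [hπ 0 x y f] with ξ hξ
  rw [RCLike.inner_apply, hξ, map_mul, ← Complex.exp_conj, Circle.smul_def, Real.fourierChar_apply]
  have hphase : conj (Complex.I * (lam * (0 + 2 * ⟪x, ξ⟫ + ⟪x, y⟫) : ℝ)) =
      -(Complex.I * (lam * ⟪x, y⟫ : ℝ)) +
        (2 * Real.pi * -⟪ξ, (lam / Real.pi) • x⟫ : ℝ) * Complex.I := by
    rw [map_mul, Complex.conj_I, Complex.conj_ofReal, real_inner_smul_right, real_inner_comm]
    push_cast
    field_simp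
    ring
  rw [hphase, Complex.exp_add, smul_eq_mul]
  ring

theorem eq_zero_or_eq_zero_of_inner_eq_zero (hπ : IsSchroedingerRep lam π) (hlam : lam ≠ 0)
    {f g : Lp ℂ 2 (volume : Measure (Em m))} (h : ∀ x y, ⟪π (0, x, y) f, g⟫_ℂ = 0) :
    f = 0 ∨ g = 0 := by
  have hF : ∀ y, (fun ξ => conj (f (ξ + y)) * g ξ) =ᵐ[volume] 0 := fun y =>
    (Lp.integrable_conj_comp_add_mul f g y).ae_eq_zero_of_fourier_eq_zero <| funext fun v => by
      have hv := h ((Real.pi / lam) • v) y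
      rw [hπ.inner_eq_fourier, smul_smul, div_mul_div_cancel₀ Real.pi_ne_zero,
        div_self hlam, one_smul] at hv
      exact (mul_eq_zero.1 hv).resolve_left (Complex.exp_ne_zero _)
  have hnorm : ∀ y, ∀ᵐ ξ, ‖f (ξ + y)‖ₑ * ‖g ξ‖ₑ = 0 := fun y => by
    filter_upwards [hF y] with ξ hξ
    rw [← RCLike.enorm_conj, ← enorm_mul, hξ, Pi.zero_apply, enorm_zero]
  refine (ae_eq_zero_or_ae_eq_zero_of_forall_ae_add_mul_eq_zero
    (Lp.stronglyMeasurable f).measurable.enorm (Lp.stronglyMeasurable g).measurable.enorm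
    hnorm).imp (fun hf => ?_) (fun hg => ?_)
  · exact Lp.eq_zero_iff_ae_eq_zero.2 (hf.mono fun ξ => enorm_eq_zero.1)
  · exact Lp.eq_zero_iff_ae_eq_zero.2 (hg.mono fun ξ => enorm_eq_zero.1)

end IsSchroedingerRep

/-- The Schrödinger representation `π_λ` of the Heisenberg group on `L²(ℝ^m)`,
i.e. any family of unitary operators satisfying
`(π_λ(it, x+iy)φ)(ξ) = exp(iλ(t + 2⟨x,ξ⟩ + ⟨x,y⟩)) · φ(ξ + y)` a.e., is
irreducible: every closed invariant subspace is `0` or all of `L²(ℝ^m)`. -/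
theorem schroedinger_representation_irreducible (m : ℕ) (lam : ℝ) (hlam : lam ≠ 0)
    (π : HeisR m →
      (Lp ℂ 2 (volume : Measure (Em m)) ≃ₗᵢ[ℂ] Lp ℂ 2 (volume : Measure (Em m))))
    (hformula : ∀ (t : ℝ) (x y : Em m) (φ : Lp ℂ 2 (volume : Measure (Em m))),
      ⇑(π (t, x, y) φ) =ᵐ[volume]
        fun ξ : Em m =>
          Complex.exp (Complex.I * (lam * (t + 2 * ⟪x, ξ⟫ + ⟪x, y⟫) : ℝ)) * φ (ξ + y)) :
    ∀ V : Submodule ℂ (Lp ℂ 2 (volume : Measure (Em m))),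
      IsClosed (V : Set (Lp ℂ 2 (volume : Measure (Em m)))) →
      (∀ (g : HeisR m) (φ : Lp ℂ 2 (volume : Measure (Em m))), φ ∈ V → π g φ ∈ V) →
      V = ⊥ ∨ V = ⊤ := by
  intro V hV hinv
  have : CompleteSpace V := hV.completeSpace_coe
  refine or_iff_not_imp_left.2 fun hV0 => Submodule.orthogonal_eq_bot_iff.1 ?_
  obtain ⟨f, hfV, hf0⟩ := V.ne_bot_iff.1 hV0
  refine (Submodule.eq_bot_iff _).2 fun g hg => ?_
  have hcoeff : ∀ x y, ⟪π (0, x, y) f, g⟫_ℂ = 0 := fun x y =>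
    (V.mem_orthogonal g).1 hg _ (hinv _ f hfV)
  exact (IsSchroedingerRep.eq_zero_or_eq_zero_of_inner_eq_zero hformula hlam hcoeff).resolve_left
    hf0
end

section
/- Let G be a second countable, locally compact, unimodular topological group, Z a closed subgroup of the center of G, μ a Haar measure on G/Z, and π an irreducible unitary representation of G on H with central character ζ that is square integrable modulo Z. Fix a nonzero vector v ∈ H. Then the map T : u ↦ f_{u,v} is an injective bounded linear map from H into the Hilbert space L²(G/Z : ζ) = {measurable F : G → ℂ with F(gz) = ζ(z)F(g) for all z ∈ Z and ∫_{G/Z} |F|² dμ < ∞}, and T intertwines π with the left regular action (ℓ(x)F)(g) = F(x⁻¹g); hence π is unitarily equivalent to a subrepresentation of the left regular representation ℓ_ζ of G on L²(G/Z : ζ). -/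
/-!
Everything reduces to the orthogonality relation `∫_{G/Z} |⟨u, π(x)v⟩|² dμ = c ‖u‖²`.
Since `Quotient.out` need not be measurable, `T u ∘ out` is not a priori an element of `L²`;
what does descend to a continuous function on `G/Z` is the `Z`-invariant product
`⟨a, π(x)v⟩⟨π(x)v, b⟩`, whose integral is a positive hermitian form on `H`. This form is
bounded: the seminorm `a ↦ ‖⟨π(·)v, a⟩‖_{L²}` is lower semicontinuous by Fatou's lemma, hence
continuous because Banach spaces are barrelled. The operator representing the form commutes
with `π` by left invariance of `μ`, so by Schur's lemma it is a scalar `c`, and `c > 0` because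
the integrand is positive near the identity coset. Injectivity of `T` holds because the vectors
orthogonal to the orbit of `v` form a closed invariant subspace not containing `v`.
-/

open MeasureTheory Filter Topology
open scoped ComplexInnerProductSpace ENNReal

section LpSeminorm

variable {𝕜 E X : Type*} [NontriviallyNormedField 𝕜] [NormedAddCommGroup E] [NormedSpace 𝕜 E]
  [MeasurableSpace X] {μ : Measure X} {r : ℝ≥0∞} {p : X → Seminorm 𝕜 E}

noncomputable def Seminorm.lpNormOfFamily (p : X → Seminorm 𝕜 E) (r : ℝ≥0∞) (μ : Measure X)
    (hr : 1 ≤ r) (hp : ∀ a, MemLp (fun x => p x a) r μ) : Seminorm 𝕜 E :=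
  Seminorm.of (fun a => lpNorm (fun x => p x a) r μ)
    (fun a b => (lpNorm_mono_real ((hp a).add (hp b)) fun x => by
        simpa [abs_of_nonneg (apply_nonneg _ _)] using map_add_le_add (p x) a b).trans
      (lpNorm_add_le (hp a) hr))
    (fun c a => by
      simp_rw [map_smul_eq_mul]
      convert lpNorm_const_smul (p := r) ‖c‖ (fun x => p x a) μ using 1 <;> simp [Pi.smul_def])

theorem Seminorm.lowerSemicontinuous_lpNormOfFamily (hr : 1 ≤ r)
    (hp : ∀ a, MemLp (fun x => p x a) r μ) (hcont : ∀ x, Continuous (p x)) :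
    LowerSemicontinuous (lpNormOfFamily p r μ hr hp) := by
  refine lowerSemicontinuous_iff_frequently.2 fun a y hy => ?_
  obtain ⟨b, hb⟩ := hy.exists
  have hy0 : 0 ≤ y := (apply_nonneg _ b).trans hb
  have := frequently_iff_neBot.1 hy
  change lpNorm _ r μ ≤ y
  rw [← toReal_eLpNorm (hp a).1]
  refine ENNReal.toReal_le_of_le_ofReal hy0 <| Lp.eLpNorm_le_of_ae_tendsto
    (u := 𝓝 a ⊓ 𝓟 {a' | lpNormOfFamily p r μ hr hp a' ≤ y}) ?_ (fun b => (hp b).1)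
    (ae_of_all _ fun x => ((hcont x).tendsto a).mono_left inf_le_left)
  filter_upwards [mem_inf_of_right (mem_principal_self _)] with b hb
  rw [← ofReal_lpNorm (hp b)]
  exact ENNReal.ofReal_le_ofReal hb

theorem Seminorm.exists_lpNorm_apply_le [CompleteSpace E] (hr : 1 ≤ r)
    (hp : ∀ a, MemLp (fun x => p x a) r μ) (hcont : ∀ x, Continuous (p x)) :
    ∃ C, 0 < C ∧ ∀ a, lpNorm (fun x => p x a) r μ ≤ C * ‖a‖ :=
  bound_of_continuous_normedSpace _ <|
    continuous_of_lowerSemicontinuous _ (lowerSemicontinuous_lpNormOfFamily hr hp hcont)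

end LpSeminorm

theorem inner_mul_inner_swap_eq_norm_sq {H : Type*} [NormedAddCommGroup H]
    [InnerProductSpace ℂ H] (a w : H) : ⟪a, w⟫ * ⟪w, a⟫ = ((‖⟪a, w⟫‖ ^ 2 : ℝ) : ℂ) := by
  rw [← inner_conj_symm w a, Complex.mul_conj', Complex.ofReal_pow]

section WeaklySquareIntegrableFamily

variable {X H : Type*} [MeasurableSpace X] {μ : Measure X}
  [NormedAddCommGroup H] [InnerProductSpace ℂ H] {w : X → H}

theorem aestronglyMeasurable_norm_inner
    (hmeas : ∀ a b, AEStronglyMeasurable (fun x => ⟪a, w x⟫ * ⟪w x, b⟫) μ) (a : H) :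
    AEStronglyMeasurable (fun x => ‖⟪w x, a⟫‖) μ := by
  have hsqrt : (fun x => ‖⟪w x, a⟫‖) = fun x => √‖⟪a, w x⟫ * ⟪w x, a⟫‖ := by
    ext x
    rw [norm_mul, norm_inner_symm, Real.sqrt_mul_self (norm_nonneg _)]
  rw [hsqrt]
  exact Real.continuous_sqrt.comp_aestronglyMeasurable (hmeas a a).norm

theorem memLp_norm_inner
    (hmeas : ∀ a b, AEStronglyMeasurable (fun x => ⟪a, w x⟫ * ⟪w x, b⟫) μ)
    (hL2 : ∀ a, Integrable (fun x => ‖⟪a, w x⟫‖ ^ 2) μ) (a : H) :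
    MemLp (fun x => ‖⟪w x, a⟫‖) 2 μ :=
  (memLp_two_iff_integrable_sq (aestronglyMeasurable_norm_inner hmeas a)).2 <| by
    simpa only [norm_inner_symm] using hL2 a

theorem integrable_inner_mul_inner
    (hmeas : ∀ a b, AEStronglyMeasurable (fun x => ⟪a, w x⟫ * ⟪w x, b⟫) μ)
    (hL2 : ∀ a, Integrable (fun x => ‖⟪a, w x⟫‖ ^ 2) μ) (a b : H) :
    Integrable (fun x => ⟪a, w x⟫ * ⟪w x, b⟫) μ := by
  refine ((memLp_norm_inner hmeas hL2 b).integrable_mul (memLp_norm_inner hmeas hL2 a)).mono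
    (hmeas a b) (ae_of_all _ fun x => ?_)
  simp [norm_inner_symm, mul_comm]

theorem norm_integral_inner_mul_inner_le
    (hmeas : ∀ a b, AEStronglyMeasurable (fun x => ⟪a, w x⟫ * ⟪w x, b⟫) μ)
    (hL2 : ∀ a, Integrable (fun x => ‖⟪a, w x⟫‖ ^ 2) μ) (a b : H) :
    ‖∫ x, ⟪a, w x⟫ * ⟪w x, b⟫ ∂μ‖
      ≤ lpNorm (fun x => ‖⟪w x, a⟫‖) 2 μ * lpNorm (fun x => ‖⟪w x, b⟫‖) 2 μ := by
  have hmemLp (c : H) : MemLp (fun x => ‖⟪w x, c⟫‖) (ENNReal.ofReal 2) μ := by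
    simpa using memLp_norm_inner hmeas hL2 c
  have hlpNorm (c : H) :
      lpNorm (fun x => ‖⟪w x, c⟫‖) 2 μ = (∫ x, ‖⟪w x, c⟫‖ ^ (2 : ℝ) ∂μ) ^ (1 / 2 : ℝ) := by
    rw [lpNorm_eq_integral_norm_rpow_toReal two_ne_zero ENNReal.ofNat_ne_top
      (aestronglyMeasurable_norm_inner hmeas c)]
    norm_num
  calc ‖∫ x, ⟪a, w x⟫ * ⟪w x, b⟫ ∂μ‖ ≤ ∫ x, ‖⟪w x, a⟫‖ * ‖⟪w x, b⟫‖ ∂μ := by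
        simpa only [norm_mul, norm_inner_symm a] using
          norm_integral_le_integral_norm (μ := μ) fun x => ⟪a, w x⟫ * ⟪w x, b⟫
    _ ≤ _ := by
      rw [hlpNorm, hlpNorm]
      exact integral_mul_le_Lp_mul_Lq_of_nonneg Real.HolderConjugate.two_two
        (ae_of_all _ fun _ => norm_nonneg _) (ae_of_all _ fun _ => norm_nonneg _)
        (hmemLp a) (hmemLp b)

theorem exists_isSelfAdjoint_inner_eq_integral [CompleteSpace H]
    (hmeas : ∀ a b, AEStronglyMeasurable (fun x => ⟪a, w x⟫ * ⟪w x, b⟫) μ)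
    (hL2 : ∀ a, Integrable (fun x => ‖⟪a, w x⟫‖ ^ 2) μ) :
    ∃ A : H →L[ℂ] H, IsSelfAdjoint A ∧ ∀ a b, ⟪A a, b⟫ = ∫ x, ⟪a, w x⟫ * ⟪w x, b⟫ ∂μ := by
  obtain ⟨C, hC0, hC⟩ := Seminorm.exists_lpNorm_apply_le
    (p := fun x => (normSeminorm ℂ ℂ).comp (innerₛₗ ℂ (w x))) one_le_two
    (memLp_norm_inner hmeas hL2) fun x => show Continuous fun a => ‖⟪w x, a⟫‖ by fun_prop
  have hint := integrable_inner_mul_inner hmeas hL2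
  let B : H →L⋆[ℂ] H →L[ℂ] ℂ := LinearMap.mkContinuous₂
    (LinearMap.mk₂'ₛₗ (starRingEnd ℂ) (RingHom.id ℂ) (fun a b => ∫ x, ⟪a, w x⟫ * ⟪w x, b⟫ ∂μ)
      (fun a a' b => by
        simp_rw [inner_add_left, add_mul]; exact integral_add (hint a b) (hint a' b))
      (fun c a b => by simp_rw [inner_smul_left, mul_assoc]; exact integral_const_mul _ _)
      (fun a b b' => by
        simp_rw [inner_add_right, mul_add]; exact integral_add (hint a b) (hint a b'))
      (fun c a b => by
        simp_rw [inner_smul_right, mul_left_comm _ c]; exact integral_const_mul _ _))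
    (C * C) fun a b => (norm_integral_inner_mul_inner_le hmeas hL2 a b).trans <|
      calc _ ≤ C * ‖a‖ * (C * ‖b‖) :=
            mul_le_mul (hC a) (hC b) lpNorm_nonneg (by positivity [hC0.le])
        _ = _ := by ring
  refine ⟨InnerProductSpace.continuousLinearMapOfBilin B, ?_,
    InnerProductSpace.continuousLinearMapOfBilin_apply B⟩
  refine ContinuousLinearMap.isSelfAdjoint_iff_isSymmetric.2 fun a b => ?_
  simp only [ContinuousLinearMap.coe_coe]
  rw [← inner_conj_symm a, InnerProductSpace.continuousLinearMapOfBilin_apply,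
    InnerProductSpace.continuousLinearMapOfBilin_apply]
  change ∫ x, ⟪a, w x⟫ * ⟪w x, b⟫ ∂μ = starRingEnd ℂ (∫ x, ⟪b, w x⟫ * ⟪w x, a⟫ ∂μ)
  simp [← integral_conj, mul_comm]

end WeaklySquareIntegrableFamily

section Schur

variable {H : Type*} [NormedAddCommGroup H] [InnerProductSpace ℂ H] [CompleteSpace H]

def IsTopologicallyIrreducible {ι : Type*} (ρ : ι → H → H) : Prop :=
  ∀ V : Submodule ℂ H, IsClosed (V : Set H) → (∀ i, ∀ w ∈ V, ρ i w ∈ V) → V = ⊥ ∨ V = ⊤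

variable {ι : Type*} {ρ : ι → H →L[ℂ] H} {A : H →L[ℂ] H}

theorem cfc_eq_zero_or_cfc_eq_zero_of_mul_eq_zero
    (hirr : IsTopologicallyIrreducible fun i => ρ i) (hcomm : ∀ i, Commute A (ρ i))
    {f h : ℝ → ℝ} (hf : Continuous f) (hh : Continuous h) (hfh : ∀ t, f t * h t = 0) :
    cfc f A = 0 ∨ cfc h A = 0 := by
  have hinv : ∀ i, ∀ w ∈ (cfc h A).ker, ρ i w ∈ (cfc h A).ker := by
    intro i w hw
    simp only [LinearMap.mem_ker, ContinuousLinearMap.coe_coe] at hw ⊢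
    rw [← mul_apply_eq_comp, ((hcomm i).cfc_real h).eq, mul_apply_eq_comp, hw, map_zero]
  have hrange : cfc h A * cfc f A = 0 := by
    rw [← cfc_mul h f A]
    simp [mul_comm, hfh]
  rcases hirr _ (ContinuousLinearMap.isClosed_ker _) hinv with hbot | htop
  · left
    ext w
    have hw : cfc f A w ∈ (cfc h A).ker := by
      simp only [LinearMap.mem_ker, ContinuousLinearMap.coe_coe]
      rw [← mul_apply_eq_comp, hrange, zero_apply]
    simpa [hbot] using hw
  · right
    ext w
    simpa using (htop ▸ Submodule.mem_top : w ∈ (cfc h A).ker)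

theorem cfc_ne_zero_of_mem_spectrum [Nontrivial H] (hA : IsSelfAdjoint A) {f : ℝ → ℝ}
    (hf : Continuous f) {t : ℝ} (ht : t ∈ spectrum ℝ A) (hft : f t ≠ 0) : cfc f A ≠ 0 := by
  intro h0
  have hmem : f t ∈ spectrum ℝ (cfc f A) := cfc_map_spectrum f A ▸ ⟨t, ht, rfl⟩
  rw [h0, spectrum.zero_eq] at hmem
  exact hft hmem

theorem spectrum_subsingleton_of_commute [Nontrivial H]
    (hirr : IsTopologicallyIrreducible fun i => ρ i) (hA : IsSelfAdjoint A)
    (hcomm : ∀ i, Commute A (ρ i)) : (spectrum ℝ A).Subsingleton := by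
  suffices ∀ r ∈ spectrum ℝ A, ∀ b ∈ spectrum ℝ A, ¬ r < b from
    fun r hr b hb => le_antisymm (not_lt.1 (this b hb r hr)) (not_lt.1 (this r hr b hb))
  intro r hr b hb hrb
  -- `max (m - ·) 0` and `max (· - m) 0` have disjoint supports separating `r` from `b`.
  let m := (r + b) / 2
  have hdisj (t : ℝ) : max (m - t) 0 * max (t - m) 0 = 0 := by
    rcases le_total t m with h | h <;> simp [h]
  rcases cfc_eq_zero_or_cfc_eq_zero_of_mul_eq_zero hirr hcomm (by fun_prop) (by fun_prop) hdisj
    with h0 | h0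
  · exact cfc_ne_zero_of_mem_spectrum hA (by fun_prop) hr (by simp [m]; linarith) h0
  · exact cfc_ne_zero_of_mem_spectrum hA (by fun_prop) hb (by simp [m]; linarith) h0

theorem IsSelfAdjoint.exists_eq_algebraMap_of_commute [Nontrivial H]
    (hirr : IsTopologicallyIrreducible fun i => ρ i) (hA : IsSelfAdjoint A)
    (hcomm : ∀ i, Commute A (ρ i)) : ∃ r : ℝ, A = algebraMap ℝ _ r := by
  obtain ⟨r, hr⟩ := ContinuousFunctionalCalculus.spectrum_nonempty (R := ℝ) A hA
  exact ⟨r, CFC.eq_algebraMap_of_spectrum_subset_singleton A r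
    fun b hb => spectrum_subsingleton_of_commute hirr hA hcomm hb hr⟩

end Schur

section QuotientDescent

variable {G Y : Type*} [Group G] {Z : Subgroup G} {F : G → Y}

theorem comp_out_mk_of_mul_right_eq (hF : ∀ g (z : Z), F (g * z) = F g) (g : G) :
    F (Quotient.out (g : G ⧸ Z)) = F g := by
  obtain ⟨z, hz⟩ := QuotientGroup.mk_out_eq_mul Z g
  rw [hz, hF]

theorem continuous_comp_out_of_mul_right_eq [TopologicalSpace G] [TopologicalSpace Y]
    (hcont : Continuous F) (hF : ∀ g (z : Z), F (g * z) = F g) :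
    Continuous fun x : G ⧸ Z => F (Quotient.out x) :=
  (QuotientGroup.isQuotientMap_mk Z).continuous_iff.2 <| by
    simpa [Function.comp_def, comp_out_mk_of_mul_right_eq hF] using hcont

end QuotientDescent

theorem commute_of_inner_map_map {H : Type*} [NormedAddCommGroup H] [InnerProductSpace ℂ H]
    {A : H →L[ℂ] H} (U : H ≃ₗᵢ[ℂ] H) (h : ∀ a b, ⟪A (U a), U b⟫ = ⟪A a, b⟫) :
    Commute A ((U : H ≃L[ℂ] H) : H →L[ℂ] H) := by
  ext a
  refine ext_inner_right ℂ fun b => ?_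
  rw [mul_apply_eq_comp, mul_apply_eq_comp, ← U.apply_symm_apply b]
  exact (h a _).trans (U.inner_map_map _ _).symm

section UnitaryRepresentation

variable {G H : Type*} [Group G] [NormedAddCommGroup H] [InnerProductSpace ℂ H]
  {π : G → H ≃ₗᵢ[ℂ] H}

theorem map_one_apply_of_map_mul (hhom : ∀ g g' w, π (g * g') w = π g (π g' w)) (w : H) :
    π 1 w = w :=
  (π 1).injective (by rw [← hhom, one_mul])

theorem inner_map_left_of_map_mul (hhom : ∀ g g' w, π (g * g') w = π g (π g' w))
    (g : G) (a b : H) : ⟪π g a, b⟫ = ⟪a, π g⁻¹ b⟫ := by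
  rw [← (π g).inner_map_map a, ← hhom, mul_inv_cancel, map_one_apply_of_map_mul hhom]

theorem inner_map_right_of_map_mul (hhom : ∀ g g' w, π (g * g') w = π g (π g' w))
    (g : G) (a b : H) : ⟪a, π g b⟫ = ⟪π g⁻¹ a, b⟫ := by
  rw [inner_map_left_of_map_mul hhom, inv_inv]

theorem eq_zero_of_forall_inner_map_eq_zero (hhom : ∀ g g' w, π (g * g') w = π g (π g' w))
    (hirr : IsTopologicallyIrreducible fun g => π g) {u v : H} (hv : v ≠ 0)
    (hu : ∀ g, ⟪u, π g v⟫ = 0) : u = 0 := by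
  let V : Submodule ℂ H := ⨅ g, LinearMap.ker (innerₛₗ ℂ (π g v))
  have hmem (w : H) : w ∈ V ↔ ∀ g, ⟪π g v, w⟫ = 0 := by simp [V]
  have hclosed : IsClosed (V : Set H) := by
    rw [show (V : Set H) = ⋂ g, {w | ⟪π g v, w⟫ = 0} by ext; simp [hmem]]
    exact isClosed_iInter fun g => isClosed_eq (by fun_prop) continuous_const
  have hinv : ∀ h, ∀ w ∈ V, π h w ∈ V := by
    intro h w hw
    rw [hmem] at hw ⊢
    intro g
    rw [inner_map_right_of_map_mul hhom, ← hhom, hw]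
  rcases hirr V hclosed hinv with hbot | htop
  · have hu' : u ∈ V := (hmem u).2 fun g => by rw [← inner_conj_symm, hu, map_zero]
    simpa [hbot] using hu'
  · have hv' := (hmem v).1 (htop ▸ Submodule.mem_top) 1
    rw [map_one_apply_of_map_mul hhom, inner_self_eq_zero] at hv'
    exact absurd hv' hv

variable {Z : Subgroup G} {ζ : Z → ℂ}

theorem inner_mul_inner_map_mul_central (hhom : ∀ g g' w, π (g * g') w = π g (π g' w))
    (hζunit : ∀ z, ‖ζ z‖ = 1) (hcentral : ∀ (z : Z) w, π z w = ζ z • w)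
    (a b v : H) (g : G) (z : Z) :
    ⟪a, π (g * z) v⟫ * ⟪π (g * z) v, b⟫ = ⟪a, π g v⟫ * ⟪π g v, b⟫ := by
  rw [hhom, hcentral, map_smul, inner_smul_right, inner_smul_left, mul_mul_mul_comm,
    Complex.mul_conj', hζunit]
  simp

variable [TopologicalSpace G]

theorem continuous_inner_mul_inner_map_out (hhom : ∀ g g' w, π (g * g') w = π g (π g' w))
    (hcont : Continuous fun p : G × H => π p.1 p.2)
    (hζunit : ∀ z, ‖ζ z‖ = 1) (hcentral : ∀ (z : Z) w, π z w = ζ z • w) (a b v : H) :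
    Continuous fun x : G ⧸ Z => ⟪a, π (Quotient.out x) v⟫ * ⟪π (Quotient.out x) v, b⟫ :=
  continuous_comp_out_of_mul_right_eq (F := fun g => ⟪a, π g v⟫ * ⟪π g v, b⟫)
    (by fun_prop) (inner_mul_inner_map_mul_central hhom hζunit hcentral a b v)

theorem integral_norm_inner_map_sq_pos [MeasurableSpace (G ⧸ Z)] {μ : Measure (G ⧸ Z)}
    [μ.IsOpenPosMeasure]
    (hhom : ∀ g g' w, π (g * g') w = π g (π g' w))
    (hcont : Continuous fun p : G × H => π p.1 p.2)
    (hζunit : ∀ z, ‖ζ z‖ = 1) (hcentral : ∀ (z : Z) w, π z w = ζ z • w) {v : H} (hv : v ≠ 0)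
    (hL2 : Integrable (fun x : G ⧸ Z => ‖⟪v, π (Quotient.out x) v⟫‖ ^ 2) μ) :
    0 < ∫ x : G ⧸ Z, ‖⟪v, π (Quotient.out x) v⟫‖ ^ 2 ∂μ := by
  have hsq (w : H) : ‖⟪v, w⟫‖ ^ 2 = ‖⟪v, w⟫ * ⟪w, v⟫‖ := by
    rw [inner_mul_inner_swap_eq_norm_sq, Complex.norm_real, Real.norm_of_nonneg (sq_nonneg _)]
  simp_rw [hsq] at hL2 ⊢
  refine integral_pos_of_integrable_nonneg_nonzero (x := ((1 : G) : G ⧸ Z))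
    (continuous_inner_mul_inner_map_out hhom hcont hζunit hcentral v v v).norm hL2
    (fun x => norm_nonneg _) ?_
  rw [comp_out_mk_of_mul_right_eq (F := fun g => ⟪v, π g v⟫ * ⟪π g v, v⟫)
    (inner_mul_inner_map_mul_central hhom hζunit hcentral v v v), map_one_apply_of_map_mul hhom]
  exact norm_ne_zero_iff.2 (mul_ne_zero (inner_self_ne_zero.2 hv) (inner_self_ne_zero.2 hv))

variable [IsTopologicalGroup G] [Z.Normal] [MeasurableSpace (G ⧸ Z)] [BorelSpace (G ⧸ Z)]
  {μ : Measure (G ⧸ Z)}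

theorem integral_inner_map_mul_inner_map_eq [μ.IsMulLeftInvariant]
    (hhom : ∀ g g' w, π (g * g') w = π g (π g' w))
    (hζunit : ∀ z, ‖ζ z‖ = 1) (hcentral : ∀ (z : Z) w, π z w = ζ z • w) (a b v : H) (g : G) :
    ∫ x : G ⧸ Z, ⟪π g a, π (Quotient.out x) v⟫ * ⟪π (Quotient.out x) v, π g b⟫ ∂μ
      = ∫ x : G ⧸ Z, ⟪a, π (Quotient.out x) v⟫ * ⟪π (Quotient.out x) v, b⟫ ∂μ := by
  have hdescend := comp_out_mk_of_mul_right_eq (F := fun h => ⟪a, π h v⟫ * ⟪π h v, b⟫)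
    (inner_mul_inner_map_mul_central hhom hζunit hcentral a b v)
  conv_rhs => rw [← integral_mul_left_eq_self _ (g : G ⧸ Z)⁻¹]
  congr 1 with x
  have hx : ((g⁻¹ * Quotient.out x : G) : G ⧸ Z) = (g : G ⧸ Z)⁻¹ * x := by
    rw [QuotientGroup.mk_mul, QuotientGroup.mk_inv, QuotientGroup.out_eq']
  rw [← hx, hdescend, hhom, inner_map_left_of_map_mul hhom g, inner_map_right_of_map_mul hhom g]

theorem exists_integral_norm_inner_map_sq_eq [CompleteSpace H] [μ.IsMulLeftInvariant]
    (hhom : ∀ g g' w, π (g * g') w = π g (π g' w))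
    (hcont : Continuous fun p : G × H => π p.1 p.2) (hirr : IsTopologicallyIrreducible fun g => π g)
    (hζunit : ∀ z, ‖ζ z‖ = 1) (hcentral : ∀ (z : Z) w, π z w = ζ z • w) {v : H} (hv : v ≠ 0)
    (hL2 : ∀ u, Integrable (fun x : G ⧸ Z => ‖⟪u, π (Quotient.out x) v⟫‖ ^ 2) μ) :
    ∃ c : ℝ, ∀ u, ∫ x : G ⧸ Z, ‖⟪u, π (Quotient.out x) v⟫‖ ^ 2 ∂μ = c * ‖u‖ ^ 2 := by
  obtain ⟨A, hA, hAform⟩ := exists_isSelfAdjoint_inner_eq_integral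
    (fun a b => (continuous_inner_mul_inner_map_out hhom hcont hζunit hcentral a b v
      ).aestronglyMeasurable) hL2
  have hcomm (g : G) : Commute A ((π g : H ≃L[ℂ] H) : H →L[ℂ] H) :=
    commute_of_inner_map_map (π g) fun a b => by
      rw [hAform, hAform, integral_inner_map_mul_inner_map_eq hhom hζunit hcentral]
  have : Nontrivial H := ⟨⟨v, 0, hv⟩⟩
  obtain ⟨c, rfl⟩ := hA.exists_eq_algebraMap_of_commute hirr hcomm
  refine ⟨c, fun u => Complex.ofReal_injective ?_⟩
  calc ((∫ x : G ⧸ Z, ‖⟪u, π (Quotient.out x) v⟫‖ ^ 2 ∂μ : ℝ) : ℂ)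
      = ∫ x : G ⧸ Z, ⟪u, π (Quotient.out x) v⟫ * ⟪π (Quotient.out x) v, u⟫ ∂μ := by
        simp_rw [inner_mul_inner_swap_eq_norm_sq, integral_complex_ofReal]
    _ = ⟪algebraMap ℝ (H →L[ℂ] H) c u, u⟫ := (hAform u u).symm
    _ = ((c * ‖u‖ ^ 2 : ℝ) : ℂ) := by
        rw [ContinuousLinearMap.algebraMap_apply, ← Complex.coe_smul, inner_smul_left,
          inner_self_eq_norm_sq_to_K, Complex.conj_ofReal]
        push_cast
        rfl

end UnitaryRepresentation

theorem coefficient_map_embeds_into_regular_representation_general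
    {G : Type*} [Group G] [TopologicalSpace G] [IsTopologicalGroup G]
    (Z : Subgroup G) [Z.Normal]
    [MeasurableSpace (G ⧸ Z)] [BorelSpace (G ⧸ Z)]
    (μ : Measure (G ⧸ Z)) [μ.IsHaarMeasure]
    {H : Type*} [NormedAddCommGroup H] [InnerProductSpace ℂ H] [CompleteSpace H]
    (π : G → (H ≃ₗᵢ[ℂ] H))
    (hhom : ∀ (g g' : G) (v : H), π (g * g') v = π g (π g' v))
    (hcont : Continuous fun p : G × H => π p.1 p.2)
    (hirr : ∀ V : Submodule ℂ H, IsClosed (V : Set H) →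
      (∀ g : G, ∀ v ∈ V, π g v ∈ V) → V = ⊥ ∨ V = ⊤)
    (ζ : Z → ℂ)
    (hζunit : ∀ z : Z, ‖ζ z‖ = 1)
    (hcentral : ∀ (z : Z) (v : H), π (z : G) v = ζ z • v)
    -- `π` is square integrable modulo `Z`
    (hL2 : ∀ u v : H, Integrable (fun x : G ⧸ Z => ‖⟪u, π (Quotient.out x) v⟫‖ ^ 2) μ)
    -- the fixed nonzero vector `v` and the coefficient map `T`
    (v : H) (hv : v ≠ 0)
    (T : H → G → ℂ) (hT : ∀ (u : H) (g : G), T u g = ⟪u, π g v⟫) :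
    -- `T` is additive and conjugate-linear
    (∀ u u' : H, T (u + u') = T u + T u') ∧
    (∀ (c : ℂ) (u : H), T (c • u) = (starRingEnd ℂ) c • T u) ∧
    -- `T` is injective
    Function.Injective T ∧
    -- `T` takes values in `L²(G/Z : ζ)`
    (∀ (u : H) (g : G) (z : Z), T u (g * (z : G)) = ζ z * T u g) ∧
    (∀ u : H, Integrable (fun x : G ⧸ Z => ‖T u (Quotient.out x)‖ ^ 2) μ) ∧
    -- `T` is bounded, indeed a positive multiple of an isometry
    (∃ c : ℝ, 0 < c ∧
      ∀ u : H, ∫ x : G ⧸ Z, ‖T u (Quotient.out x)‖ ^ 2 ∂μ = c * ‖u‖ ^ 2) ∧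
    -- `T` intertwines `π` with the left regular action `(ℓ(x)F)(g) = F(x⁻¹g)`
    (∀ (x g : G) (u : H), T (π x u) g = T u (x⁻¹ * g)) := by
  refine ⟨fun u u' => ?_, fun c u => ?_, fun a b hab => ?_, fun u g z => ?_,
    fun u => by simpa only [hT] using hL2 u v, ?_, fun x g u => ?_⟩
  · ext g
    simp only [hT, Pi.add_apply, inner_add_left]
  · ext g
    simp only [hT, Pi.smul_apply, smul_eq_mul, inner_smul_left]
  · refine sub_eq_zero.1 (eq_zero_of_forall_inner_map_eq_zero hhom hirr hv fun g => ?_)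
    rw [inner_sub_left, ← hT, ← hT, congrFun hab g, sub_self]
  · rw [hT, hT, hhom, hcentral, map_smul, inner_smul_right]
  · obtain ⟨c, hc⟩ := exists_integral_norm_inner_map_sq_eq hhom hcont hirr hζunit hcentral hv
      fun u => hL2 u v
    have hpos := integral_norm_inner_map_sq_pos hhom hcont hζunit hcentral hv (hL2 v v)
    refine ⟨c, (mul_pos_iff_of_pos_right (by positivity)).1 (hc v ▸ hpos), ?_⟩
    simpa only [hT] using hc
  · rw [hT, hT, inner_map_left_of_map_mul hhom, hhom]

/-- Let `π` be an irreducible unitary representation, square integrable modulo a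
closed central subgroup `Z` with unitary central character `ζ`, of a second countable
locally compact unimodular group `G`. Fix `0 ≠ v ∈ H`.  Then the coefficient map
`T : u ↦ f_{u,v} = (g ↦ ⟨u, π(g)v⟩)` is an injective bounded (conjugate-)linear map
of `H` into the space `L²(G/Z : ζ)` of measurable functions `F` with
`F(gz) = ζ(z)F(g)` and `∫_{G/Z} |F|² dμ < ∞`; it intertwines `π` with the left
regular action `(ℓ(x)F)(g) = F(x⁻¹g)`, and (being a positive multiple of an
isometry) exhibits `π` as unitarily equivalent to a subrepresentation of the left
regular representation `ℓ_ζ` of `G` on `L²(G/Z : ζ)`. -/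
theorem coefficient_map_embeds_into_regular_representation
    {G : Type*} [Group G] [TopologicalSpace G] [IsTopologicalGroup G]
    [LocallyCompactSpace G] [SecondCountableTopology G]
    [MeasurableSpace G] [BorelSpace G]
    (ν : Measure G) [ν.IsHaarMeasure] [ν.IsMulRightInvariant]
    (Z : Subgroup G) [Z.Normal] (hZcentral : Z ≤ Subgroup.center G)
    (hZclosed : IsClosed (Z : Set G))
    [MeasurableSpace (G ⧸ Z)] [BorelSpace (G ⧸ Z)]
    (μ : Measure (G ⧸ Z)) [μ.IsHaarMeasure]
    {H : Type*} [NormedAddCommGroup H] [InnerProductSpace ℂ H] [CompleteSpace H]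
    (π : G → (H ≃ₗᵢ[ℂ] H))
    (hhom : ∀ (g g' : G) (v : H), π (g * g') v = π g (π g' v))
    (hcont : Continuous fun p : G × H => π p.1 p.2)
    (hirr : ∀ V : Submodule ℂ H, IsClosed (V : Set H) →
      (∀ g : G, ∀ v ∈ V, π g v ∈ V) → V = ⊥ ∨ V = ⊤)
    (ζ : Z → ℂ)
    (hζhom : ∀ z z' : Z, ζ (z * z') = ζ z * ζ z')
    (hζunit : ∀ z : Z, ‖ζ z‖ = 1)
    (hζcont : Continuous ζ)
    (hcentral : ∀ (z : Z) (v : H), π (z : G) v = ζ z • v)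
    -- `π` is square integrable modulo `Z`
    (hL2 : ∀ u v : H, Integrable (fun x : G ⧸ Z => ‖⟪u, π (Quotient.out x) v⟫‖ ^ 2) μ)
    -- the fixed nonzero vector `v` and the coefficient map `T`
    (v : H) (hv : v ≠ 0)
    (T : H → G → ℂ) (hT : ∀ (u : H) (g : G), T u g = ⟪u, π g v⟫) :
    -- `T` is additive and conjugate-linear
    (∀ u u' : H, T (u + u') = T u + T u') ∧
    (∀ (c : ℂ) (u : H), T (c • u) = (starRingEnd ℂ) c • T u) ∧
    -- `T` is injective
    Function.Injective T ∧
    -- `T` takes values in `L²(G/Z : ζ)`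
    (∀ (u : H) (g : G) (z : Z), T u (g * (z : G)) = ζ z * T u g) ∧
    (∀ u : H, Integrable (fun x : G ⧸ Z => ‖T u (Quotient.out x)‖ ^ 2) μ) ∧
    -- `T` is bounded, indeed a positive multiple of an isometry
    (∃ c : ℝ, 0 < c ∧
      ∀ u : H, ∫ x : G ⧸ Z, ‖T u (Quotient.out x)‖ ^ 2 ∂μ = c * ‖u‖ ^ 2) ∧
    -- `T` intertwines `π` with the left regular action `(ℓ(x)F)(g) = F(x⁻¹g)`
    (∀ (x g : G) (u : H), T (π x u) g = T u (x⁻¹ * g)) :=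
  coefficient_map_embeds_into_regular_representation_general Z μ π hhom hcont hirr ζ hζunit hcentral
    hL2 v hv T hT
end

section
/- (Characterization of spherical functions.) Let G be a locally compact Hausdorff topological group with a left Haar measure, K a compact subgroup with normalized Haar measure dk, and φ : G → ℂ a continuous K-bi-invariant function with φ(1) = 1. Then the linear functional f ↦ (f ∗ φ)(1) = ∫_G f(g)φ(g⁻¹)dg is multiplicative on the convolution algebra C_c(K\G/K) of compactly supported continuous K-bi-invariant functions (i.e. ((f∗h)∗φ)(1) = ((f∗φ)(1))·((h∗φ)(1)) for all such f, h) if and only if φ satisfies the functional equation φ(g₁)·φ(g₂) = ∫_K φ(g₁ k g₂) dk for all g₁, g₂ ∈ G. -/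
/-!
Write `Λ f = ∫ f(g) φ(g⁻¹) dg`. Unfolding the convolution, and averaging over `K` using the left
`K`-invariance of `h`, gives `Λ(f ∗ h) = ∫∫ f(g) h(y) S(y⁻¹, g⁻¹) dy dg` with
`S(a, b) = ∫_K φ(a k b) dk`, while `Λ f · Λ h` is the same double integral with the kernel
`φ(y⁻¹) φ(g⁻¹)`. So the functional equation `S(a, b) = φ(a) φ(b)` gives multiplicativity at once.
Conversely, both kernels are continuous and `K`-bi-invariant in each variable, and a continuous
`K`-bi-invariant function orthogonal to `C_c(K\G/K)` vanishes: test it against the `K`-bi-average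
of a bump function concentrated near a point. Applied first in `g` and then in `y`, this identifies
the two kernels.
-/

open MeasureTheory

/-- Convolution of two complex valued functions with respect to a measure `ν` on a
group `G`: `(f ∗ h)(x) = ∫ f(g) h(g⁻¹x) dν(g)`. -/
noncomputable def convocc {G : Type*} [Group G] [MeasurableSpace G]
    (ν : Measure G) (f h : G → ℂ) : G → ℂ :=
  fun x => ∫ g, f g * h (g⁻¹ * x) ∂ν

/-- A function on `G` is `K`-bi-invariant if it is invariant under left and right
translation by elements of `K`. -/
def IsKBiInvariant {G : Type*} [Group G] (K : Subgroup G) (f : G → ℂ) : Prop :=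
  ∀ k ∈ K, ∀ g : G, f (k * g) = f g ∧ f (g * k) = f g

open Set Function

section ParametricIntegral

variable {X Y : Type*} [TopologicalSpace X] [TopologicalSpace Y] [MeasurableSpace Y]
  [OpensMeasurableSpace Y] {μ : Measure Y} [IsFiniteMeasureOnCompacts μ]
  {E : Type*} [NormedAddCommGroup E] [NormedSpace ℝ E]

lemma continuous_integral_of_compact_support {f : X → Y → E} {k : Set Y} (hk : IsCompact k)
    (hf : Continuous (uncurry f)) (hfk : ∀ x, ∀ y ∉ k, f x y = 0) :
    Continuous fun x => ∫ y, f x y ∂μ :=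
  continuousOn_univ.mp <|
    continuousOn_integral_of_compact_support hk hf.continuousOn fun x y _ hy => hfk x y hy

lemma continuous_integral_of_compactSpace [CompactSpace Y] {f : X → Y → E}
    (hf : Continuous (uncurry f)) : Continuous fun x => ∫ y, f x y ∂μ :=
  continuous_integral_of_compact_support isCompact_univ hf fun _ _ hy => (hy (mem_univ _)).elim

lemma continuous_integral_mul_of_hasCompactSupport {h : Y → ℂ} (hh : Continuous h)
    (hhs : HasCompactSupport h) {W : Y → X → ℂ} (hW : Continuous (uncurry W)) :
    Continuous fun x => ∫ y, h y * W y x ∂μ :=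
  continuous_integral_of_compact_support hhs
    ((hh.comp continuous_snd).mul (hW.comp continuous_swap)) fun _ _ hy => by
      simp [image_eq_zero_of_notMem_tsupport hy]

end ParametricIntegral

lemma MeasureTheory.Measure.isMulRightInvariant_of_isProbabilityMeasure {H : Type*} [Group H]
    [TopologicalSpace H] [IsTopologicalGroup H] [LocallyCompactSpace H] [MeasurableSpace H]
    [BorelSpace H] (μ : Measure H) [μ.IsHaarMeasure] [IsProbabilityMeasure μ] :
    μ.IsMulRightInvariant where
  map_mul_right_eq_self k := by
    have : IsProbabilityMeasure (μ.map (· * k)) :=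
      Measure.isProbabilityMeasure_map (measurable_mul_const k).aemeasurable
    exact Measure.isHaarMeasure_eq_of_isProbabilityMeasure _ _

namespace IsKBiInvariant

variable {G : Type*} [Group G] {K : Subgroup G} {f f' : G → ℂ}

lemma apply_mul_mul (hf : IsKBiInvariant K f) {k₁ k₂ : G} (hk₁ : k₁ ∈ K) (hk₂ : k₂ ∈ K)
    (g : G) : f (k₁ * g * k₂) = f g := by
  rw [(hf k₂ hk₂ _).2, (hf k₁ hk₁ g).1]

lemma comp_inv (hf : IsKBiInvariant K f) : IsKBiInvariant K fun g => f g⁻¹ := fun k hk g =>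
  ⟨by simpa using (hf k⁻¹ (K.inv_mem hk) g⁻¹).2, by simpa using (hf k⁻¹ (K.inv_mem hk) g⁻¹).1⟩

lemma const (c : ℂ) : IsKBiInvariant K fun _ => c := fun _ _ _ => ⟨rfl, rfl⟩

lemma mul (hf : IsKBiInvariant K f) (hf' : IsKBiInvariant K f') :
    IsKBiInvariant K fun g => f g * f' g := fun k hk g =>
  ⟨congrArg₂ (· * ·) (hf k hk g).1 (hf' k hk g).1, congrArg₂ (· * ·) (hf k hk g).2 (hf' k hk g).2⟩

lemma sub (hf : IsKBiInvariant K f) (hf' : IsKBiInvariant K f') : IsKBiInvariant K (f - f') :=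
  fun k hk g => ⟨congrArg₂ (· - ·) (hf k hk g).1 (hf' k hk g).1,
    congrArg₂ (· - ·) (hf k hk g).2 (hf' k hk g).2⟩

lemma integral_mul {Y : Type*} [MeasurableSpace Y] (μ : Measure Y) (h : Y → ℂ) {W : Y → G → ℂ}
    (hW : ∀ y, IsKBiInvariant K (W y)) : IsKBiInvariant K fun g => ∫ y, h y * W y g ∂μ :=
  fun k hk g => ⟨by simp only [((hW _) k hk g).1], by simp only [((hW _) k hk g).2]⟩

end IsKBiInvariant

section DoubleCosetAverage

variable {G : Type*} [Group G] {K : Subgroup G} [MeasurableSpace K] (μK : Measure K)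
  {f : G → ℝ}

noncomputable def doubleCosetAverage (f : G → ℝ) (g : G) : ℝ :=
  ∫ k₁, ∫ k₂, f ((k₁ : G)⁻¹ * g * k₂) ∂μK ∂μK

lemma doubleCosetAverage_nonneg (hf : 0 ≤ f) : 0 ≤ doubleCosetAverage μK f :=
  fun _ => integral_nonneg fun _ => integral_nonneg fun _ => hf _

lemma exists_apply_ne_zero_of_doubleCosetAverage_ne_zero {g : G}
    (hg : doubleCosetAverage μK f g ≠ 0) : ∃ k₁ k₂ : K, f ((k₁ : G)⁻¹ * g * k₂) ≠ 0 := by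
  contrapose! hg
  simp [doubleCosetAverage, hg]

variable [TopologicalSpace G] [IsTopologicalGroup G]

lemma doubleCosetAverage_mul_left [BorelSpace K] [μK.IsMulLeftInvariant] (k : K) (g : G) :
    doubleCosetAverage μK f (k * g) = doubleCosetAverage μK f g := by
  rw [doubleCosetAverage, ← integral_mul_left_eq_self _ k]
  simp [doubleCosetAverage, mul_assoc]

lemma doubleCosetAverage_mul_right [BorelSpace K] [μK.IsMulLeftInvariant] (k : K) (g : G) :
    doubleCosetAverage μK f (g * k) = doubleCosetAverage μK f g := by
  simp only [doubleCosetAverage]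
  congr 1 with k₁
  rw [← integral_mul_left_eq_self _ k⁻¹]
  simp [mul_assoc]

lemma isKBiInvariant_doubleCosetAverage [BorelSpace K] [μK.IsMulLeftInvariant] :
    IsKBiInvariant K fun g => (doubleCosetAverage μK f g : ℂ) := fun k hk g => by
  simp only [doubleCosetAverage_mul_left μK ⟨k, hk⟩ g, doubleCosetAverage_mul_right μK ⟨k, hk⟩ g,
    and_self]

lemma hasCompactSupport_doubleCosetAverage [CompactSpace K] (hf : HasCompactSupport f) :
    HasCompactSupport (doubleCosetAverage μK f) := by
  have hK : IsCompact (K : Set G) := isCompact_iff_compactSpace.mpr ‹_›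
  refine .intro ((hK.mul hf).mul hK) fun g hg => ?_
  by_contra hne
  obtain ⟨k₁, k₂, hk⟩ := exists_apply_ne_zero_of_doubleCosetAverage_ne_zero μK hne
  refine hg ⟨_, ⟨k₁, k₁.2, _, subset_tsupport f hk, rfl⟩, _, K.inv_mem k₂.2, ?_⟩
  group

variable [CompactSpace K] [BorelSpace K] [μK.IsHaarMeasure]

lemma continuous_integral_apply_mul_coe (hf : Continuous f) :
    Continuous fun x => ∫ k, f (x * (k : G)) ∂μK :=
  continuous_integral_of_compactSpace (hf.comp (continuous_fst.mul continuous_subtype_val.snd'))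

lemma continuous_doubleCosetAverage (hf : Continuous f) : Continuous (doubleCosetAverage μK f) :=
  continuous_integral_of_compactSpace (f := fun g (k₁ : K) => ∫ k₂, f ((k₁ : G)⁻¹ * g * k₂) ∂μK)
    ((continuous_integral_apply_mul_coe μK hf).comp
      (continuous_subtype_val.snd'.inv.mul continuous_fst))

lemma doubleCosetAverage_pos (hf : Continuous f) (hf₀ : 0 ≤ f) {g : G} (hg : 0 < f g) :
    0 < doubleCosetAverage μK f g := by
  have hinner : 0 < ∫ k₂, f (g * (k₂ : G)) ∂μK :=
    Continuous.integral_pos_of_hasCompactSupport_nonneg_nonzero (by fun_prop) (.of_compactSpace _)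
      (fun _ => hf₀ _) (x := 1) (by simpa using hg.ne')
  have hcont : Continuous fun k₁ : K => ∫ k₂, f ((k₁ : G)⁻¹ * g * k₂) ∂μK :=
    (continuous_integral_apply_mul_coe μK hf).comp (by fun_prop)
  exact hcont.integral_pos_of_hasCompactSupport_nonneg_nonzero
    (.of_compactSpace _) (fun _ => integral_nonneg fun _ => hf₀ _) (x := 1)
    (by simpa [mul_assoc] using hinner.ne')

end DoubleCosetAverage

lemma norm_le_of_integral_ofReal_mul_eq_zero {α : Type*} [MeasurableSpace α] {μ : Measure α}
    {F : α → ℝ} {Ψ : α → ℂ} {c : ℂ} {ε : ℝ} (hF : Integrable F μ) (hF₀ : 0 ≤ F)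
    (hFpos : 0 < ∫ x, F x ∂μ) (hFΨ : Integrable (fun x => (F x : ℂ) * Ψ x) μ)
    (hclose : ∀ x, F x ≠ 0 → ‖Ψ x - c‖ ≤ ε) (h₀ : ∫ x, (F x : ℂ) * Ψ x ∂μ = 0) : ‖c‖ ≤ ε := by
  have hFc : Integrable (fun x => (F x : ℂ) * c) μ := hF.ofReal.mul_const c
  have hpointwise : ∀ x, ‖(F x : ℂ) * c - F x * Ψ x‖ ≤ F x * ε := fun x => by
    rcases eq_or_ne (F x) 0 with hx | hx
    · simp [hx]
    · rw [← mul_sub, norm_mul, Complex.norm_real, Real.norm_of_nonneg (hF₀ x), norm_sub_rev]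
      exact mul_le_mul_of_nonneg_left (hclose x hx) (hF₀ x)
  have hbound : ‖c‖ * ∫ x, F x ∂μ ≤ ε * ∫ x, F x ∂μ :=
    calc ‖c‖ * ∫ x, F x ∂μ = ‖∫ x, ((F x : ℂ) * c - F x * Ψ x) ∂μ‖ := by
          rw [integral_sub hFc hFΨ, h₀, sub_zero, integral_mul_const, integral_complex_ofReal,
            norm_mul, Complex.norm_real, Real.norm_of_nonneg hFpos.le, mul_comm]
      _ ≤ ∫ x, F x * ε ∂μ := norm_integral_le_of_norm_le (hF.mul_const ε) (.of_forall hpointwise)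
      _ = ε * ∫ x, F x ∂μ := by rw [integral_mul_const, mul_comm]
  exact le_of_mul_le_mul_right hbound hFpos

theorem exists_bump_isKBiInvariant {G : Type*} [Group G] [TopologicalSpace G]
    [IsTopologicalGroup G] [LocallyCompactSpace G] {K : Subgroup G} [CompactSpace K]
    [MeasurableSpace K] [BorelSpace K] {U : Set G} (hU : IsOpen U) {x₀ : G} (hx₀ : x₀ ∈ U) :
    ∃ F : G → ℝ, Continuous F ∧ HasCompactSupport F ∧ 0 ≤ F ∧ 0 < F x₀ ∧
      IsKBiInvariant K (fun g => (F g : ℂ)) ∧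
      ∀ g, F g ≠ 0 → ∃ k₁ ∈ K, ∃ k₂ ∈ K, k₁ * g * k₂ ∈ U := by
  obtain ⟨b, hb₁, hb₀, hbs, hb01⟩ := exists_continuous_one_zero_of_isCompact
    (isCompact_singleton (x := x₀)) hU.isClosed_compl
    (disjoint_compl_right_iff_subset.mpr (singleton_subset_iff.mpr hx₀))
  have hb : 0 ≤ ⇑b := fun x => (hb01 x).1
  refine ⟨doubleCosetAverage Measure.haar b, continuous_doubleCosetAverage _ b.continuous,
    hasCompactSupport_doubleCosetAverage _ hbs, doubleCosetAverage_nonneg _ hb,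
    doubleCosetAverage_pos _ b.continuous hb (by simp [hb₁ rfl]),
    isKBiInvariant_doubleCosetAverage _, fun g hg => ?_⟩
  obtain ⟨k₁, k₂, hk⟩ := exists_apply_ne_zero_of_doubleCosetAverage_ne_zero _ hg
  exact ⟨_, K.inv_mem k₁.2, k₂, k₂.2, by_contra fun hU => hk (hb₀ hU)⟩

section OrthogonalToBiInvariant

variable {G : Type*} [Group G] [TopologicalSpace G] [IsTopologicalGroup G] [LocallyCompactSpace G]
  [MeasurableSpace G] [BorelSpace G] (ν : Measure G) [IsFiniteMeasureOnCompacts ν]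
  [ν.IsOpenPosMeasure] {K : Subgroup G} [CompactSpace K] [MeasurableSpace K] [BorelSpace K]

theorem eq_zero_of_forall_integral_mul_eq_zero {Ψ : G → ℂ} (hΨ : Continuous Ψ)
    (hΨK : IsKBiInvariant K Ψ)
    (h : ∀ F : G → ℂ, Continuous F → HasCompactSupport F → IsKBiInvariant K F →
      ∫ x, F x * Ψ x ∂ν = 0) : Ψ = 0 := by
  funext x₀
  refine norm_le_zero_iff.mp (le_of_forall_gt_imp_ge_of_dense fun ε hε => ?_)
  obtain ⟨F, hF, hFs, hF₀, hFx₀, hFK, hFU⟩ := exists_bump_isKBiInvariant (K := K)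
    (U := {x | ‖Ψ x - Ψ x₀‖ < ε}) (isOpen_lt (hΨ.sub continuous_const).norm continuous_const)
    (x₀ := x₀) (by simpa using hε)
  have hFc : Continuous fun g => (F g : ℂ) := Complex.continuous_ofReal.comp hF
  have hFcs : HasCompactSupport fun g => (F g : ℂ) := hFs.comp_left Complex.ofReal_zero
  refine norm_le_of_integral_ofReal_mul_eq_zero (hF.integrable_of_hasCompactSupport hFs) hF₀
    (hF.integral_pos_of_hasCompactSupport_nonneg_nonzero hFs hF₀ hFx₀.ne')
    ((hFc.mul hΨ).integrable_of_hasCompactSupport hFcs.mul_right) (fun g hg => ?_)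
    (h _ hFc hFcs hFK)
  obtain ⟨k₁, hk₁, k₂, hk₂, hU⟩ := hFU g hg
  rw [← hΨK.apply_mul_mul hk₁ hk₂ g]
  exact hU.le

theorem eq_of_forall_integral_mul_eq {Ψ₁ Ψ₂ : G → ℂ} (hΨ₁ : Continuous Ψ₁)
    (hΨ₂ : Continuous Ψ₂) (hΨ₁K : IsKBiInvariant K Ψ₁) (hΨ₂K : IsKBiInvariant K Ψ₂)
    (h : ∀ F : G → ℂ, Continuous F → HasCompactSupport F → IsKBiInvariant K F →
      ∫ x, F x * Ψ₁ x ∂ν = ∫ x, F x * Ψ₂ x ∂ν) : Ψ₁ = Ψ₂ := by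
  refine sub_eq_zero.mp (eq_zero_of_forall_integral_mul_eq_zero ν (hΨ₁.sub hΨ₂)
    (hΨ₁K.sub hΨ₂K) fun F hF hFs hFK => ?_)
  simp only [Pi.sub_apply, mul_sub]
  have hint : ∀ {Ψ : G → ℂ}, Continuous Ψ → Integrable (fun x => F x * Ψ x) ν :=
    fun hΨ => (hF.mul hΨ).integrable_of_hasCompactSupport hFs.mul_right
  rw [integral_sub (hint hΨ₁) (hint hΨ₂), h F hF hFs hFK, sub_self]

end OrthogonalToBiInvariant

section SphericalAverage

variable {G : Type*} [Group G] [TopologicalSpace G] [IsTopologicalGroup G] {K : Subgroup G}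
  [MeasurableSpace K] (μK : Measure K)

noncomputable def sphericalAverage (φ : G → ℂ) (a b : G) : ℂ :=
  ∫ k : K, φ (a * k * b) ∂μK

variable {φ : G → ℂ}

lemma continuous_sphericalAverage [CompactSpace K] [BorelSpace K] [IsFiniteMeasure μK]
    (hφ : Continuous φ) :
    Continuous (uncurry (sphericalAverage μK φ)) :=
  continuous_integral_of_compactSpace
    (hφ.comp ((continuous_fst.fst.mul continuous_subtype_val.snd').mul continuous_fst.snd))

lemma isKBiInvariant_sphericalAverage_left [BorelSpace K] [μK.IsMulLeftInvariant]
    (hφ : IsKBiInvariant K φ) (b : G) :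
    IsKBiInvariant K fun a => sphericalAverage μK φ a b := by
  intro k hk a
  refine ⟨by simp only [sphericalAverage, mul_assoc, (hφ k hk _).1], ?_⟩
  simpa [sphericalAverage, mul_assoc] using
    integral_mul_left_eq_self (μ := μK) (fun x : K => φ (a * x * b)) ⟨k, hk⟩

lemma isKBiInvariant_sphericalAverage_right [BorelSpace K] [μK.IsMulRightInvariant]
    (hφ : IsKBiInvariant K φ) (a : G) :
    IsKBiInvariant K fun b => sphericalAverage μK φ a b := by
  intro k hk b
  refine ⟨?_, by simp only [sphericalAverage, ← mul_assoc, (hφ k hk _).2]⟩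
  simpa [sphericalAverage, mul_assoc] using
    integral_mul_right_eq_self (μ := μK) (fun x : K => φ (a * x * b)) ⟨k, hk⟩

end SphericalAverage

section Convolution

variable {G : Type*} [Group G] [TopologicalSpace G] [IsTopologicalGroup G]
  [MeasurableSpace G] [BorelSpace G] (ν : Measure G) [IsFiniteMeasureOnCompacts ν]
  [ν.IsMulLeftInvariant] {f h ψ : G → ℂ}

lemma integral_convocc_mul (hf : Continuous f) (hfs : HasCompactSupport f) (hh : Continuous h)
    (hhs : HasCompactSupport h) (hψ : Continuous ψ) :
    ∫ x, convocc ν f h x * ψ x ∂ν = ∫ g, f g * ∫ y, h y * ψ (g * y) ∂ν ∂ν := by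
  have hswap := integral_integral_swap_of_hasCompactSupport (μ := ν) (ν := ν)
    (f := fun x g => f g * h (g⁻¹ * x) * ψ x)
    (((hf.comp continuous_snd).mul (hh.comp (continuous_snd.inv.mul continuous_fst))).mul
      (hψ.comp continuous_fst))
    (.intro ((hfs.mul hhs).prod hfs) fun ⟨x, g⟩ hxg => by
      by_contra hne
      have hf₀ : f g ≠ 0 := left_ne_zero_of_mul (left_ne_zero_of_mul hne)
      have hh₀ : h (g⁻¹ * x) ≠ 0 := right_ne_zero_of_mul (left_ne_zero_of_mul hne)
      exact hxg ⟨⟨g, subset_tsupport f hf₀, g⁻¹ * x, subset_tsupport h hh₀,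
        mul_inv_cancel_left g x⟩, subset_tsupport f hf₀⟩)
  calc ∫ x, convocc ν f h x * ψ x ∂ν = ∫ x, ∫ g, f g * h (g⁻¹ * x) * ψ x ∂ν ∂ν := by
        simp only [convocc, integral_mul_const]
    _ = ∫ g, ∫ x, f g * h (g⁻¹ * x) * ψ x ∂ν ∂ν := hswap
    _ = ∫ g, f g * ∫ y, h y * ψ (g * y) ∂ν ∂ν := by
        congr 1 with g
        rw [← integral_const_mul, ← integral_mul_left_eq_self _ g]
        simp [mul_assoc]

variable {K : Subgroup G} [CompactSpace K] [MeasurableSpace K] [BorelSpace K] (μK : Measure K)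

lemma integral_mul_eq_integral_mul_integral_inv_mul [IsProbabilityMeasure μK] (hh : Continuous h)
    (hhs : HasCompactSupport h) (hψ : Continuous ψ) (hhK : ∀ k ∈ K, ∀ y, h (k * y) = h y) :
    ∫ y, h y * ψ y ∂ν = ∫ y, h y * ∫ k : K, ψ ((k : G)⁻¹ * y) ∂μK ∂ν := by
  have hswap := integral_integral_swap_of_hasCompactSupport (μ := ν) (ν := μK)
    (f := fun y (k : K) => h y * ψ ((k : G)⁻¹ * y))
    ((hh.comp continuous_fst).mul
      (hψ.comp (continuous_subtype_val.snd'.inv.mul continuous_fst)))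
    (.intro (hhs.prod isCompact_univ) fun ⟨y, k⟩ hyk => by
      have hy : y ∉ tsupport h := fun hy => hyk ⟨hy, mem_univ _⟩
      simp [image_eq_zero_of_notMem_tsupport hy])
  calc ∫ y, h y * ψ y ∂ν = ∫ k : K, ∫ y, h y * ψ y ∂ν ∂μK := by simp
    _ = ∫ k : K, ∫ y, h y * ψ ((k : G)⁻¹ * y) ∂ν ∂μK := by
        congr 1 with k
        rw [← integral_mul_left_eq_self (fun y => h y * ψ ((k : G)⁻¹ * y)) (k : G)]
        simp [hhK k k.2]
    _ = ∫ y, ∫ k : K, h y * ψ ((k : G)⁻¹ * y) ∂μK ∂ν := hswap.symm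
    _ = ∫ y, h y * ∫ k : K, ψ ((k : G)⁻¹ * y) ∂μK ∂ν := by simp only [integral_const_mul]

theorem integral_convocc_mul_inv [IsProbabilityMeasure μK] {φ : G → ℂ} (hφ : Continuous φ)
    (hf : Continuous f) (hfs : HasCompactSupport f) (hh : Continuous h)
    (hhs : HasCompactSupport h) (hhK : ∀ k ∈ K, ∀ y, h (k * y) = h y) :
    ∫ x, convocc ν f h x * φ x⁻¹ ∂ν =
      ∫ g, f g * ∫ y, h y * sphericalAverage μK φ y⁻¹ g⁻¹ ∂ν ∂ν := by
  rw [integral_convocc_mul ν (ψ := fun x => φ x⁻¹) hf hfs hh hhs (hφ.comp continuous_inv)]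
  congr 1 with g
  rw [integral_mul_eq_integral_mul_integral_inv_mul ν μK (ψ := fun y => φ (g * y)⁻¹) hh hhs
    (hφ.comp (continuous_const_mul g).inv) hhK]
  simp [sphericalAverage, mul_assoc]

end Convolution

lemma integral_mul_inv_mul_integral_mul_inv {G : Type*} [Group G] [MeasurableSpace G]
    (ν : Measure G) (f h φ : G → ℂ) :
    (∫ x, f x * φ x⁻¹ ∂ν) * ∫ x, h x * φ x⁻¹ ∂ν =
      ∫ g, f g * ∫ y, h y * (φ y⁻¹ * φ g⁻¹) ∂ν ∂ν := by
  simp only [← mul_assoc, integral_mul_const]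
  rw [← integral_mul_const]
  exact integral_congr_ae (.of_forall fun g => by ring)

theorem spherical_function_characterization_general
    {G : Type*} [Group G] [TopologicalSpace G] [IsTopologicalGroup G]
    [LocallyCompactSpace G] [MeasurableSpace G] [BorelSpace G]
    (ν : Measure G) [ν.IsHaarMeasure]
    (K : Subgroup G) (hK : IsCompact (K : Set G))
    [BorelSpace K] (μK : Measure K) [μK.IsHaarMeasure] [IsProbabilityMeasure μK]
    (φ : G → ℂ) (hφcont : Continuous φ) (hφbi : IsKBiInvariant K φ) :
    (∀ f h : G → ℂ,
        Continuous f → HasCompactSupport f → IsKBiInvariant K f →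
        Continuous h → HasCompactSupport h → IsKBiInvariant K h →
        ∫ x, convocc ν f h x * φ x⁻¹ ∂ν
          = (∫ x, f x * φ x⁻¹ ∂ν) * ∫ x, h x * φ x⁻¹ ∂ν) ↔
      (∀ g₁ g₂ : G, φ g₁ * φ g₂ = ∫ k : K, φ (g₁ * (k : G) * g₂) ∂μK) := by
  have : CompactSpace K := isCompact_iff_compactSpace.mp hK
  have : μK.IsMulRightInvariant := μK.isMulRightInvariant_of_isProbabilityMeasure
  have hS := continuous_sphericalAverage μK hφcont
  have hconv := fun f h hf hfs hh hhs (hhK : IsKBiInvariant K h) =>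
    integral_convocc_mul_inv ν μK (f := f) hφcont hf hfs hh hhs fun k hk y => (hhK k hk y).1
  constructor
  · intro hmul g₁ g₂
    have hinner : ∀ h : G → ℂ, Continuous h → HasCompactSupport h → IsKBiInvariant K h →
        (fun g => ∫ y, h y * sphericalAverage μK φ y⁻¹ g⁻¹ ∂ν) =
          fun g => ∫ y, h y * (φ y⁻¹ * φ g⁻¹) ∂ν := fun h hh hhs hhK =>
      eq_of_forall_integral_mul_eq ν
        (continuous_integral_mul_of_hasCompactSupport hh hhs
          (hS.comp (continuous_fst.inv.prodMk continuous_snd.inv)))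
        (continuous_integral_mul_of_hasCompactSupport hh hhs
          ((hφcont.comp continuous_fst.inv).mul (hφcont.comp continuous_snd.inv)))
        (.integral_mul ν h fun _ => (isKBiInvariant_sphericalAverage_right μK hφbi _).comp_inv)
        (.integral_mul ν h fun _ => (IsKBiInvariant.const _).mul hφbi.comp_inv)
        fun f hf hfs hfK => by
          rw [← hconv f h hf hfs hh hhs hhK, hmul f h hf hfs hfK hh hhs hhK,
            integral_mul_inv_mul_integral_mul_inv]
    have hkernel : (fun y => sphericalAverage μK φ y⁻¹ g₂) = fun y => φ y⁻¹ * φ g₂ :=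
      eq_of_forall_integral_mul_eq ν (hS.comp (continuous_inv.prodMk continuous_const))
        ((hφcont.comp continuous_inv).mul continuous_const)
        (isKBiInvariant_sphericalAverage_left μK hφbi _).comp_inv
        (hφbi.comp_inv.mul (.const _)) fun h hh hhs hhK => by
          simpa using congrFun (hinner h hh hhs hhK) g₂⁻¹
    simpa [sphericalAverage] using (congrFun hkernel g₁⁻¹).symm
  · intro hfe f h hf hfs _ hh hhs hhK
    rw [hconv f h hf hfs hh hhs hhK, integral_mul_inv_mul_integral_mul_inv]
    simp only [sphericalAverage, ← hfe]

/-- Characterization of spherical functions.  Let `G` be a locally compact Hausdorff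
group with left Haar measure `ν`, `K` a compact subgroup with normalized Haar
measure `μK`, and `φ : G → ℂ` continuous, `K`-bi-invariant with `φ(1) = 1`.  Then
`f ↦ (f ∗ φ)(1) = ∫ f(g) φ(g⁻¹) dν` is multiplicative on the convolution algebra
`C_c(K\G/K)` if and only if `φ(g₁)φ(g₂) = ∫_K φ(g₁ k g₂) dk` for all `g₁, g₂`. -/
theorem spherical_function_characterization
    {G : Type*} [Group G] [TopologicalSpace G] [IsTopologicalGroup G]
    [T2Space G] [LocallyCompactSpace G] [MeasurableSpace G] [BorelSpace G]
    (ν : Measure G) [ν.IsHaarMeasure]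
    (K : Subgroup G) (hK : IsCompact (K : Set G))
    [BorelSpace K] (μK : Measure K) [μK.IsHaarMeasure] [IsProbabilityMeasure μK]
    (φ : G → ℂ) (hφcont : Continuous φ) (hφbi : IsKBiInvariant K φ)
    (hφone : φ 1 = 1) :
    (∀ f h : G → ℂ,
        Continuous f → HasCompactSupport f → IsKBiInvariant K f →
        Continuous h → HasCompactSupport h → IsKBiInvariant K h →
        ∫ x, convocc ν f h x * φ x⁻¹ ∂ν
          = (∫ x, f x * φ x⁻¹ ∂ν) * ∫ x, h x * φ x⁻¹ ∂ν) ↔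
      (∀ g₁ g₂ : G, φ g₁ * φ g₂ = ∫ k : K, φ (g₁ * (k : G) * g₂) ∂μK) :=
  spherical_function_characterization_general ν K hK μK φ hφcont hφbi
end

section
/- Let G be a locally compact Hausdorff topological group, K a compact subgroup with normalized Haar measure dk, and π an irreducible unitary representation of G on a complex Hilbert space H such that the subspace H^K of K-fixed vectors is one-dimensional. Let v ∈ H^K with ‖v‖ = 1 and define φ(g) = ⟨v, π(g)v⟩. Then φ is continuous, K-bi-invariant, φ(1) = 1, and φ satisfies the spherical functional equation φ(g₁)·φ(g₂) = ∫_K φ(g₁ k g₂) dk for all g₁, g₂ ∈ G; moreover φ is positive definite, i.e. Σ_{i,j} φ(g_j⁻¹ g_i)·conj(c_j)·c_i ≥ 0 for all finite families {c_i} ⊂ ℂ, {g_i} ⊂ G. -/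
/-!
Averaging over `K` with its Haar probability measure maps any `w ∈ H` to the `K`-fixed vector
`∫_K π(k) w dk`; as `H^K = ℂ v`, this vector is `⟪v, w⟫ v`. Taking `w = π(g₂) v` and pairing with
`π(g₁)⁻¹ v` gives `φ(g₁) φ(g₂) = ∫_K φ(g₁ k g₂) dk`. Positive definiteness is the identity
`∑ᵢ ∑ⱼ φ(gⱼ⁻¹ gᵢ) conj(cⱼ) cᵢ = ‖∑ᵢ cᵢ π(gᵢ) v‖²`.
-/

open MeasureTheory
open scoped ComplexInnerProductSpace ComplexConjugate

section

variable {H : Type*} [NormedAddCommGroup H] [InnerProductSpace ℂ H]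

theorem inner_sum_smul_sum_smul {ι : Type*} [Fintype ι] (u : ι → H) (c : ι → ℂ) :
    ⟪∑ i, c i • u i, ∑ i, c i • u i⟫ = ∑ i, ∑ j, ⟪u j, u i⟫ * conj (c j) * c i := by
  simp only [sum_inner, inner_sum, inner_smul_left, inner_smul_right, Finset.mul_sum]
  exact Finset.sum_congr rfl fun i _ => Finset.sum_congr rfl fun j _ => by ring

section Representation

variable {G : Type*} [Group G] (ρ : G →* (H ≃ₗᵢ[ℂ] H))

theorem map_mul_apply (g g' : G) (x : H) : ρ (g * g') x = ρ g (ρ g' x) := by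
  rw [map_mul]
  rfl

theorem inner_map_inv_apply (g : G) (x y : H) : ⟪ρ g⁻¹ x, y⟫ = ⟪x, ρ g y⟫ := by
  rw [← (ρ g).inner_map_map, ← map_mul_apply, mul_inv_cancel, map_one]
  rfl

theorem inner_map_inv_mul_apply (g₁ g₂ : G) (v : H) :
    ⟪v, ρ (g₁⁻¹ * g₂) v⟫ = ⟪ρ g₁ v, ρ g₂ v⟫ := by
  rw [map_mul_apply, ← inner_map_inv_apply, inv_inv]

theorem sum_inner_map_inv_mul_eq_inner_self {ι : Type*} [Fintype ι] (v : H) (c : ι → ℂ)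
    (g : ι → G) :
    ∑ i, ∑ j, ⟪v, ρ ((g j)⁻¹ * g i) v⟫ * conj (c j) * c i =
      ⟪∑ i, c i • ρ (g i) v, ∑ i, c i • ρ (g i) v⟫ := by
  simp only [inner_map_inv_mul_apply, inner_sum_smul_sum_smul]

end Representation

section Averaging

variable [CompleteSpace H] {K : Type*} [Group K] [TopologicalSpace K] [CompactSpace K]
  [MeasurableSpace K] [OpensMeasurableSpace K] (μ : Measure K) [IsFiniteMeasure μ]
  (ρ : K →* (H ≃ₗᵢ[ℂ] H)) {w : H}

theorem map_integral_orbit [MeasurableMul K] [μ.IsMulLeftInvariant]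
    (hw : Continuous fun k => ρ k w) (k₀ : K) :
    ρ k₀ (∫ k, ρ k w ∂μ) = ∫ k, ρ k w ∂μ := by
  have hint := hw.integrable_of_hasCompactSupport (μ := μ) (HasCompactSupport.of_compactSpace _)
  calc ρ k₀ (∫ k, ρ k w ∂μ)
      = ∫ k, ρ k₀ (ρ k w) ∂μ :=
        ((ρ k₀).toLinearIsometry.toContinuousLinearMap.integral_comp_comm hint).symm
    _ = ∫ k, ρ (k₀ * k) w ∂μ := by simp only [map_mul_apply]
    _ = ∫ k, ρ k w ∂μ := integral_mul_left_eq_self (fun k => ρ k w) k₀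

theorem inner_integral_orbit_of_forall_map_eq [IsProbabilityMeasure μ]
    (hw : Continuous fun k => ρ k w) {v : H} (hv : ∀ k, ρ k v = v) :
    ⟪v, ∫ k, ρ k w ∂μ⟫ = ⟪v, w⟫ := by
  have hint := hw.integrable_of_hasCompactSupport (μ := μ) (HasCompactSupport.of_compactSpace _)
  calc ⟪v, ∫ k, ρ k w ∂μ⟫
      = ∫ k, ⟪ρ k v, ρ k w⟫ ∂μ := by simp only [hv, integral_inner hint]
    _ = ⟪v, w⟫ := by simp only [LinearIsometryEquiv.inner_map_map, integral_const, probReal_univ,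
        one_smul]

end Averaging

theorem inner_mul_inner_eq_integral [CompleteSpace H] {G : Type*} [Group G] [TopologicalSpace G]
    [MeasurableSpace G] (K : Subgroup G) [CompactSpace K] [MeasurableMul K]
    [OpensMeasurableSpace K] (μ : Measure K) [μ.IsMulLeftInvariant] [IsProbabilityMeasure μ]
    (ρ : G →* (H ≃ₗᵢ[ℂ] H)) (hρ : ∀ w, Continuous fun k : K => ρ k w) {v : H} (hv : ‖v‖ = 1)
    (hvfix : ∀ k : K, ρ k v = v) (hdim : ∀ u : H, (∀ k : K, ρ k u = u) → ∃ c : ℂ, u = c • v)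
    (g₁ g₂ : G) :
    ⟪v, ρ g₁ v⟫ * ⟪v, ρ g₂ v⟫ = ∫ k : K, ⟪v, ρ (g₁ * k * g₂) v⟫ ∂μ := by
  set w := ρ g₂ v
  have hw : Continuous fun k => ρ.comp K.subtype k w := hρ w
  obtain ⟨c, hc⟩ := hdim _ (map_integral_orbit μ _ hw)
  have hcw : c = ⟪v, w⟫ := by
    rw [← inner_integral_orbit_of_forall_map_eq μ _ hw hvfix, hc, inner_smul_right,
      inner_self_eq_norm_sq_to_K, hv]
    simp
  calc ⟪v, ρ g₁ v⟫ * ⟪v, w⟫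
      = ⟪ρ g₁⁻¹ v, c • v⟫ := by rw [inner_smul_right, inner_map_inv_apply, hcw, mul_comm]
    _ = ∫ k, ⟪ρ g₁⁻¹ v, ρ.comp K.subtype k w⟫ ∂μ := by
        rw [← hc, integral_inner (hw.integrable_of_hasCompactSupport
          (HasCompactSupport.of_compactSpace _))]
    _ = ∫ k : K, ⟪v, ρ (g₁ * k * g₂) v⟫ ∂μ := by
        simp only [inner_map_inv_apply, map_mul_apply]
        rfl

end

theorem spherical_function_from_representation_general
    {G : Type*} [Group G] [TopologicalSpace G] [IsTopologicalGroup G]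
    [MeasurableSpace G]
    (K : Subgroup G) (hK : IsCompact (K : Set G))
    [BorelSpace K] (μK : Measure K) [μK.IsHaarMeasure] [IsProbabilityMeasure μK]
    {H : Type*} [NormedAddCommGroup H] [InnerProductSpace ℂ H] [CompleteSpace H]
    (π : G → (H ≃ₗᵢ[ℂ] H))
    (hhom : ∀ (g g' : G) (u : H), π (g * g') u = π g (π g' u))
    (hcont : Continuous fun p : G × H => π p.1 p.2)
    -- `v` is a `K`-fixed unit vector spanning the (one-dimensional) space `H^K`
    (v : H) (hvnorm : ‖v‖ = 1)
    (hvfix : ∀ k : K, π (k : G) v = v)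
    (hdim : ∀ u : H, (∀ k : K, π (k : G) u = u) → ∃ c : ℂ, u = c • v)
    (φ : G → ℂ) (hφ : ∀ g : G, φ g = ⟪v, π g v⟫) :
    Continuous φ ∧
    (∀ k ∈ K, ∀ g : G, φ (k * g) = φ g ∧ φ (g * k) = φ g) ∧
    φ 1 = 1 ∧
    (∀ g₁ g₂ : G, φ g₁ * φ g₂ = ∫ k : K, φ (g₁ * (k : G) * g₂) ∂μK) ∧
    (∀ (n : ℕ) (c : Fin n → ℂ) (g : Fin n → G),
      0 ≤ (∑ i, ∑ j, φ ((g j)⁻¹ * g i) * conj (c j) * c i).re ∧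
      (∑ i, ∑ j, φ ((g j)⁻¹ * g i) * conj (c j) * c i).im = 0) := by
  have : CompactSpace K := isCompact_iff_compactSpace.mp hK
  let ρ : G →* (H ≃ₗᵢ[ℂ] H) := MonoidHom.mk' π fun g g' => LinearIsometryEquiv.ext (hhom g g')
  obtain rfl : φ = fun g => ⟪v, ρ g v⟫ := funext hφ
  have horbit (u : H) : Continuous fun g => ρ g u :=
    hcont.comp (continuous_id.prodMk continuous_const)
  refine ⟨continuous_const.inner (horbit v), fun k hk g => ⟨?_, ?_⟩, ?_,
    inner_mul_inner_eq_integral K μK ρ (fun w => (horbit w).comp continuous_subtype_val) hvnorm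
      hvfix hdim, fun n c g => ?_⟩
  · have hkv : ρ k v = v := hvfix ⟨k, hk⟩
    dsimp only
    rw [map_mul_apply, ← hkv, LinearIsometryEquiv.inner_map_map, hkv]
  · have hkv : ρ k v = v := hvfix ⟨k, hk⟩
    dsimp only
    rw [map_mul_apply, hkv]
  · simp [inner_self_eq_norm_sq_to_K, hvnorm]
  · rw [sum_inner_map_inv_mul_eq_inner_self]
    exact ⟨inner_self_nonneg (𝕜 := ℂ), inner_self_im (𝕜 := ℂ) _⟩

/-- Positive definite spherical functions from irreducible representations with a
one-dimensional space of `K`-fixed vectors.  Let `G` be a topological group, `K` a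
compact subgroup with normalized Haar measure `μK`, and `π` an irreducible strongly
continuous unitary representation of `G` on a complex Hilbert space `H` whose space
`H^K` of `K`-fixed vectors is one-dimensional, spanned by a unit vector `v`.  Then
`φ(g) = ⟨v, π(g)v⟩` is continuous, `K`-bi-invariant, `φ(1) = 1`, satisfies the
spherical functional equation `φ(g₁)φ(g₂) = ∫_K φ(g₁ k g₂) dk`, and is positive
definite. -/
theorem spherical_function_from_representation
    {G : Type*} [Group G] [TopologicalSpace G] [IsTopologicalGroup G]
    [T2Space G] [MeasurableSpace G] [BorelSpace G]
    (K : Subgroup G) (hK : IsCompact (K : Set G))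
    [BorelSpace K] (μK : Measure K) [μK.IsHaarMeasure] [IsProbabilityMeasure μK]
    {H : Type*} [NormedAddCommGroup H] [InnerProductSpace ℂ H] [CompleteSpace H]
    (π : G → (H ≃ₗᵢ[ℂ] H))
    (hhom : ∀ (g g' : G) (u : H), π (g * g') u = π g (π g' u))
    (hcont : Continuous fun p : G × H => π p.1 p.2)
    (hirr : ∀ V : Submodule ℂ H, IsClosed (V : Set H) →
      (∀ g : G, ∀ u ∈ V, π g u ∈ V) → V = ⊥ ∨ V = ⊤)
    -- `v` is a `K`-fixed unit vector spanning the (one-dimensional) space `H^K`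
    (v : H) (hvnorm : ‖v‖ = 1)
    (hvfix : ∀ k : K, π (k : G) v = v)
    (hdim : ∀ u : H, (∀ k : K, π (k : G) u = u) → ∃ c : ℂ, u = c • v)
    (φ : G → ℂ) (hφ : ∀ g : G, φ g = ⟪v, π g v⟫) :
    Continuous φ ∧
    (∀ k ∈ K, ∀ g : G, φ (k * g) = φ g ∧ φ (g * k) = φ g) ∧
    φ 1 = 1 ∧
    (∀ g₁ g₂ : G, φ g₁ * φ g₂ = ∫ k : K, φ (g₁ * (k : G) * g₂) ∂μK) ∧
    (∀ (n : ℕ) (c : Fin n → ℂ) (g : Fin n → G),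
      0 ≤ (∑ i, ∑ j, φ ((g j)⁻¹ * g i) * conj (c j) * c i).re ∧
      (∑ i, ∑ j, φ ((g j)⁻¹ * g i) * conj (c j) * c i).im = 0) :=
  spherical_function_from_representation_general K hK μK π hhom hcont v hvnorm hvfix hdim φ hφ
end
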